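/- arXiv:2202.08356 — 5 statements merged into one kernel-verified Lean document; each statement's English description precedes it below -/
import Mathlib

section
/- Let n ≥ 3 and d ≥ 3 be integers. Let v₁, …, v_k (k ≥ 1) be nonzero fully product vectors in (ℂ^d)^{⊗n} that are pairwise orthogonal. If k ≤ d^{n-1} + ⌊(d^{n-1} − 2)/(n − 1)⌋, then there exist a site m and a nonzero biproduct vector split at site m that is orthogonal to every vᵢ. (Hence no genuinely unextendible product basis of such cardinality exists.) -/
/-!
Fix `v₁` and put `w := u₁ₘ` at a site `m` to be chosen. Since `vᵢ ⊥ v₁` and the inner product of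
product vectors is the product of the local inner products, every `i ≠ 1` is locally orthogonal to
`v₁` at some site. Hence the pairs `(i, m)` with `⟨uᵢₘ, u₁ₘ⟩ ≠ 0` number at most `(n - 1) k + 1`,
which the cardinality bound makes smaller than `n d^(n-1)`, so at some site `m` fewer than
`d^(n-1)` of the `vᵢ` are not killed by `w`. The inner product of `vᵢ` with `w ⊗ ξ` factors as
`⟨uᵢₘ, w⟩ ⟨⊗_{j ≠ m} uᵢⱼ, ξ⟩`, and fewer than `d^(n-1)` linear conditions on
`ξ ∈ (ℂ^d)^{⊗(n-1)}` leave a nonzero solution.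
-/

open Finset

theorem exists_ne_zero_forall_sum_mul_eq_zero {K I Y : Type*} [Field K] [Fintype I] [Fintype Y]
    (c : I → Y → K) (h : Fintype.card I < Fintype.card Y) :
    ∃ ξ : Y → K, ξ ≠ 0 ∧ ∀ i, ∑ y, c i y * ξ y = 0 := by
  have hdep : ¬LinearIndependent K (fun y i => c i y) := fun hli => by
    have := hli.fintype_card_le_finrank
    rw [Module.finrank_fintype_fun_eq_card] at this
    omega
  obtain ⟨g, hg, y, hy⟩ := Fintype.not_linearIndependent_iff.mp hdep
  refine ⟨g, fun h0 => hy (congrFun h0 y), fun i => ?_⟩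
  simpa [Finset.sum_apply, mul_comm] using congrFun hg i

theorem exists_card_filter_lt_of_forall_ne_exists_not {ι σ : Type*} [Fintype ι] [Fintype σ]
    (p : ι → σ → Prop) [∀ i m, Decidable (p i m)] (i₀ : ι) (h : ∀ i ≠ i₀, ∃ m, ¬p i m) {D : ℕ}
    (hD : Fintype.card ι * (Fintype.card σ - 1) + 1 < Fintype.card σ * D) :
    ∃ m, #{i | p i m} < D := by
  classical
  by_contra! hge
  have hrow : ∀ i, #{m | p i m} ≤ (Fintype.card σ - 1) + if i = i₀ then 1 else 0 := by
    intro i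
    by_cases hi : i = i₀
    · rw [if_pos hi]
      have := card_le_univ ({m | p i m} : Finset σ)
      omega
    · obtain ⟨m, hm⟩ := h i hi
      have := card_lt_univ_of_notMem (s := {m | p i m}) (by simpa using hm)
      rw [if_neg hi]
      omega
  have := calc
    Fintype.card σ * D = ∑ _m : σ, D := by simp
    _ ≤ ∑ m, #{i | p i m} := sum_le_sum fun m _ => hge m
    _ = ∑ i, #{m | p i m} :=
      (sum_card_bipartiteAbove_eq_sum_card_bipartiteBelow (fun i m => p i m)).symm
    _ ≤ ∑ i, ((Fintype.card σ - 1) + if i = i₀ then 1 else 0) := sum_le_sum fun i _ => hrow i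
    _ = Fintype.card ι * (Fintype.card σ - 1) + 1 := by simp [sum_add_distrib]
  omega

theorem mul_sub_one_add_one_lt_mul {n k D : ℕ} (hn : 1 ≤ n) (hD : 2 ≤ D)
    (hk : k ≤ D + (D - 2) / (n - 1)) : k * (n - 1) + 1 < n * D := by
  obtain ⟨N, rfl⟩ := Nat.exists_eq_add_of_le' hn
  obtain ⟨E, rfl⟩ := Nat.exists_eq_add_of_le' hD
  simp only [Nat.add_sub_cancel] at hk ⊢
  nlinarith [Nat.mul_le_mul_right N hk, Nat.div_mul_le_self E N]

section ProductVectors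

variable {R ι α : Type*} [CommSemiring R] [Fintype ι] [DecidableEq ι] [Fintype α]

theorem sum_star_prod_mul_prod [StarRing R] (u u' : ι → α → R) :
    ∑ x : ι → α, starRingEnd R (∏ j, u j (x j)) * ∏ j, u' j (x j)
      = ∏ j, ∑ a, starRingEnd R (u j a) * u' j a := by
  rw [Fintype.prod_sum]
  simp only [map_prod, prod_mul_distrib]

theorem sum_prod_mul_mul_split (m : ι) (F : ι → α → R) (w : α → R)
    (ξ : ({j // j ≠ m} → α) → R) :
    ∑ x : ι → α, (∏ j, F j (x j)) * (w (x m) * ξ (fun j => x j))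
      = (∑ a, F m a * w a) * ∑ y, (∏ j : {j // j ≠ m}, F j (y j)) * ξ y := by
  rw [Fintype.sum_equiv (Equiv.funSplitAt m α) _
    (fun p => F m p.1 * w p.1 * ((∏ j : {j // j ≠ m}, F j (p.2 j)) * ξ p.2)) fun x => by
      rw [Fintype.prod_eq_mul_prod_subtype_ne _ m, Equiv.funSplitAt_apply]
      ring,
    Fintype.sum_prod_type, sum_mul_sum]

end ProductVectors

/-- Main result (Proposition 1): if `k` pairwise-orthogonal nonzero fully product
vectors in `(ℂ^d)^{⊗n}` satisfy `k ≤ d^{n-1} + ⌊(d^{n-1} - 2)/(n-1)⌋`, then there is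
a site `m` and a nonzero biproduct vector split at `m` orthogonal to all of them.
Hence no GUPB of such cardinality exists. -/
theorem no_GUPB_of_small_cardinality
    (n d k : ℕ) (hn : 3 ≤ n) (hd : 3 ≤ d) (hk : 1 ≤ k)
    (u : Fin k → Fin n → Fin d → ℂ)
    (hu : ∀ i m, u i m ≠ 0)
    (v : Fin k → (Fin n → Fin d) → ℂ)
    (hv : ∀ i, v i = fun x => ∏ m, u i m (x m))
    (horth : ∀ i j : Fin k, i ≠ j →
      ∑ x : Fin n → Fin d, (starRingEnd ℂ) (v i x) * v j x = 0)
    (hcard : k ≤ d ^ (n - 1) + (d ^ (n - 1) - 2) / (n - 1)) :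
    ∃ (m : Fin n) (w : Fin d → ℂ)
      (ξ : ({j : Fin n // j ≠ m} → Fin d) → ℂ),
      w ≠ 0 ∧ ξ ≠ 0 ∧
      ∀ i : Fin k,
        ∑ x : Fin n → Fin d,
          (starRingEnd ℂ) (v i x) * (w (x m) * ξ (fun j => x j.1)) = 0 := by
  let i₀ : Fin k := ⟨0, hk⟩
  have hlocal : ∀ i ≠ i₀, ∃ m, ∑ a, starRingEnd ℂ (u i m a) * u i₀ m a = 0 := by
    intro i hi
    have := horth i i₀ hi
    simp only [hv, sum_star_prod_mul_prod, prod_eq_zero_iff] at this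
    simpa only [mem_univ, true_and] using this
  have hD : 2 ≤ d ^ (n - 1) := le_trans (by omega) (Nat.le_self_pow (by omega) d)
  obtain ⟨m, hm⟩ := exists_card_filter_lt_of_forall_ne_exists_not _ i₀
    (fun i hi => (hlocal i hi).imp fun _ => not_not_intro)
    (by simpa using mul_sub_one_add_one_lt_mul (by omega) hD hcard)
  obtain ⟨ξ, hξ, hξorth⟩ := exists_ne_zero_forall_sum_mul_eq_zero
    (fun (i : {i // ∑ a, starRingEnd ℂ (u i m a) * u i₀ m a ≠ 0}) (y : {j // j ≠ m} → Fin d) =>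
      ∏ j : {j // j ≠ m}, starRingEnd ℂ (u i j (y j)))
    (by simpa [Fintype.card_subtype, ← ne_eq, filter_ne'] using hm)
  refine ⟨m, u i₀ m, ξ, hu i₀ m, hξ, fun i => ?_⟩
  simp only [hv, map_prod]
  rw [sum_prod_mul_mul_split m (fun j a => starRingEnd ℂ (u i j a))]
  by_cases hi : ∑ a, starRingEnd ℂ (u i m a) * u i₀ m a = 0
  · rw [hi, zero_mul]
  · rw [hξorth ⟨i, hi⟩, mul_zero]
end

section
/- Let n ≥ 3 and d ≥ 3 be integers. Let v₁, …, v_k be nonzero fully product vectors in (ℂ^d)^{⊗n} that are pairwise orthogonal, where k = d^{n-1} + d − 1 or k = d^{n-1} + d (the minimal theoretically permissible cardinalities of a genuinely unextendible product basis, for odd and even d respectively). Then there exist a site m and a nonzero biproduct vector split at site m orthogonal to every vᵢ; i.e., no unextendible product basis of these cardinalities is a genuinely unextendible product basis. -/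
/-!
Fix one member `u i₀` of the family. Orthogonality of two fully product vectors means local
orthogonality at some site, so each of the other `k - 1` vectors is orthogonal to `u i₀` at some
site, and by pigeonhole some site `m` carries more than `k - d^(n-1)` of them (this is where
`n d ≤ d^(n-1)` enters). Take `w = u i₀ m`: it is already orthogonal to those vectors, and the
fewer than `d^(n-1)` remaining ones impose fewer linear conditions on `ξ` than the dimension of
the space of the other `n - 1` sites, so some `ξ ≠ 0` satisfies all of them.
-/

open Finset Matrix ComplexConjugate

theorem Matrix.exists_mulVec_eq_zero_of_card_lt {K m n : Type*} [Field K] [Fintype m] [Fintype n]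
    (A : Matrix m n K) (h : Fintype.card m < Fintype.card n) : ∃ ξ ≠ 0, A *ᵥ ξ = 0 := by
  obtain ⟨ξ, hξ, hne⟩ := (Submodule.ne_bot_iff _).mp
    (LinearMap.ker_ne_bot_of_finrank_lt (f := A.mulVecLin) (by simpa using h))
  exact ⟨ξ, hne, hξ⟩

theorem Finset.exists_lt_card_filter_of_mul_lt_card {α β : Type*} [Fintype β]
    (p : α → β → Prop) [∀ a b, Decidable (p a b)] {s : Finset α} (hs : ∀ a ∈ s, ∃ b, p a b)
    {n : ℕ} (h : Fintype.card β * n < #s) : ∃ b, n < #{a ∈ s | p a b} := by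
  classical
  by_contra! hle
  have hcover : s ⊆ univ.biUnion fun b => {a ∈ s | p a b} := fun a ha => by
    simpa [ha] using hs a ha
  have hcard := (card_le_card hcover).trans (card_biUnion_le_card_mul _ _ n fun b _ => hle b)
  simp only [card_univ] at hcard
  omega

theorem Nat.mul_le_pow_pred {n d : ℕ} (hn : 3 ≤ n) (hd : 3 ≤ d) : n * d ≤ d ^ (n - 1) := by
  induction n, hn using Nat.le_induction with
  | base => simp only [show 3 - 1 = 2 from rfl]; nlinarith
  | succ n hn ih =>
    rw [show n + 1 - 1 = n - 1 + 1 by omega, pow_succ]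
    nlinarith [Nat.mul_le_mul ih hd, Nat.mul_le_mul_right d hn]

section ProductVectors

variable {ι κ : Type*} [Fintype ι] [DecidableEq ι] [Fintype κ]

theorem sum_conj_prod_mul_prod (u u' : ι → κ → ℂ) :
    ∑ x : ι → κ, conj (∏ j, u j (x j)) * ∏ j, u' j (x j)
      = ∏ j, ∑ a, conj (u j a) * u' j a := by
  simp_rw [map_prod, ← prod_mul_distrib]
  exact (Fintype.prod_sum fun j a => conj (u j a) * u' j a).symm

theorem sum_prod_mul_biprod (m : ι) (G : ι → κ → ℂ) (w : κ → ℂ)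
    (ξ : ({j // j ≠ m} → κ) → ℂ) :
    ∑ x : ι → κ, (∏ j, G j (x j)) * (w (x m) * ξ (fun j => x j.1))
      = (∑ a, G m a * w a) * ∑ y : {j // j ≠ m} → κ, (∏ j, G j.1 (y j)) * ξ y := by
  rw [← (Equiv.funSplitAt m κ).symm.sum_comp, Fintype.sum_prod_type, sum_mul_sum]
  refine sum_congr rfl fun a _ => sum_congr rfl fun y _ => ?_
  rw [Fintype.prod_eq_mul_prod_subtype_ne _ m]
  simp only [Equiv.funSplitAt, Equiv.piSplitAt, Equiv.symm_mk, Equiv.coe_fn_mk, ↓reduceDIte,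
    fun j : {j // j ≠ m} => j.2, Subtype.coe_eta]
  ring

variable {α : Type*} [Fintype α]

theorem exists_biprod_orthogonal_of_card_lt (u : α → ι → κ → ℂ) (m : ι) (w : κ → ℂ)
    (h : #{i | ∑ a, conj (u i m a) * w a ≠ 0} < Fintype.card κ ^ (Fintype.card ι - 1)) :
    ∃ ξ : ({j // j ≠ m} → κ) → ℂ, ξ ≠ 0 ∧ ∀ i,
      ∑ x : ι → κ, conj (∏ j, u i j (x j)) * (w (x m) * ξ (fun j => x j.1)) = 0 := by
  let A : Matrix {i // ∑ a, conj (u i m a) * w a ≠ 0} ({j // j ≠ m} → κ) ℂ :=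
    fun i y => ∏ j, conj (u i j.1 (y j))
  have hsites : Fintype.card {j // j ≠ m} = Fintype.card ι - 1 := by
    simp [Fintype.card_subtype_compl]
  obtain ⟨ξ, hξ, hAξ⟩ := A.exists_mulVec_eq_zero_of_card_lt (by
    rwa [Fintype.card_fun, hsites, Fintype.card_subtype])
  refine ⟨ξ, hξ, fun i => ?_⟩
  simp_rw [map_prod]
  rw [sum_prod_mul_biprod m fun j a => conj (u i j a)]
  by_cases hi : ∑ a, conj (u i m a) * w a = 0
  · rw [hi, zero_mul]
  · rw [show ∑ y, (∏ j, conj (u i j.1 (y j))) * ξ y = 0 from congrFun hAξ ⟨i, hi⟩, mul_zero]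

end ProductVectors

/-- UPBs of the minimal permissible cardinalities `d^{n-1} + d - 1` (odd `d`) and
`d^{n-1} + d` (even `d`) are never genuinely unextendible: any such family of
pairwise-orthogonal nonzero fully product vectors admits a nonzero biproduct
vector, split at some site `m`, orthogonal to all its members. -/
theorem no_GUPB_of_minimal_cardinality
    (n d k : ℕ) (hn : 3 ≤ n) (hd : 3 ≤ d)
    (hk : k = d ^ (n - 1) + d - 1 ∨ k = d ^ (n - 1) + d)
    (u : Fin k → Fin n → Fin d → ℂ)
    (hu : ∀ i m, u i m ≠ 0)
    (v : Fin k → (Fin n → Fin d) → ℂ)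
    (hv : ∀ i, v i = fun x => ∏ m, u i m (x m))
    (horth : ∀ i j : Fin k, i ≠ j →
      ∑ x : Fin n → Fin d, (starRingEnd ℂ) (v i x) * v j x = 0) :
    ∃ (m : Fin n) (w : Fin d → ℂ)
      (ξ : ({j : Fin n // j ≠ m} → Fin d) → ℂ),
      w ≠ 0 ∧ ξ ≠ 0 ∧
      ∀ i : Fin k,
        ∑ x : Fin n → Fin d,
          (starRingEnd ℂ) (v i x) * (w (x m) * ξ (fun j => x j.1)) = 0 := by
  have hE : n * d ≤ d ^ (n - 1) := Nat.mul_le_pow_pred hn hd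
  have hnd : 9 ≤ n * d := Nat.mul_le_mul hn hd
  let i₀ : Fin k := ⟨0, by omega⟩
  have hcover : ∀ j ∈ univ.erase i₀, ∃ m, ∑ a, conj (u j m a) * u i₀ m a = 0 := by
    intro j hj
    have hji := horth j i₀ (ne_of_mem_erase hj)
    rw [hv, hv, sum_conj_prod_mul_prod, prod_eq_zero_iff] at hji
    simpa using hji
  obtain ⟨m, hm⟩ := exists_lt_card_filter_of_mul_lt_card _ hcover (n := k - d ^ (n - 1)) (by
    have : n * (k - d ^ (n - 1)) ≤ n * d := Nat.mul_le_mul_left n (by omega)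
    simp only [card_erase_of_mem (mem_univ i₀), card_univ, Fintype.card_fin]
    omega)
  obtain ⟨ξ, hξ, horthξ⟩ := exists_biprod_orthogonal_of_card_lt u m (u i₀ m) (by
    have hm' := hm.trans_le (card_le_card (filter_subset_filter _ (erase_subset i₀ univ)))
    have hsplit := card_filter_add_card_filter_not (s := univ)
      fun i => ∑ a, conj (u i m a) * u i₀ m a = 0
    simp only [card_univ, Fintype.card_fin, ne_eq] at hsplit ⊢
    omega)
  exact ⟨m, u i₀ m, ξ, hu i₀ m, hξ, fun i => hv i ▸ horthξ i⟩
end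

section
/- Let φ : I → (Fin a → ℂ) and ψ : I → (Fin b → ℂ) be finite families of vectors, and suppose I is partitioned into disjoint sets I₁ and I₂ (I = I₁ ∪ I₂, I₁ ∩ I₂ = ∅) such that the span of {φ_i : i ∈ I₁} is a proper subspace of ℂ^a and the span of {ψ_i : i ∈ I₂} is a proper subspace of ℂ^b. Then there exist nonzero vectors a' ∈ Fin a → ℂ and b' ∈ Fin b → ℂ such that ⟨a', φ_i⟩ · ⟨b', ψ_i⟩ = 0 for every i ∈ I; i.e., the nonzero product vector a' ⊗ b' in ℂ^a ⊗ ℂ^b is orthogonal to every product vector φ_i ⊗ ψ_i. -/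
open Matrix

theorem exists_ne_zero_forall_dotProduct_eq_zero_of_span_ne_top {K ι : Type*} [Field K]
    [Fintype ι] {s : Set (ι → K)} (h : Submodule.span K s ≠ ⊤) :
    ∃ w : ι → K, w ≠ 0 ∧ ∀ u ∈ s, w ⬝ᵥ u = 0 := by
  classical
  obtain ⟨f, hf, hspan⟩ := Submodule.exists_le_ker_of_lt_top _ (lt_top_iff_ne_top.mpr h)
  -- the nonzero functional `f` vanishing on `span s` is `w ⬝ᵥ ·` for some `w`
  let e := dotProductEquiv K ι
  refine ⟨e.symm f, by simpa using hf, fun u hu => ?_⟩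
  have hfu : f u = 0 := hspan (Submodule.subset_span hu)
  simpa [e, ← dotProductEquiv_apply_apply] using hfu

theorem extendible_of_partition_general {I : Type*} [Fintype I] [DecidableEq I] (a b : ℕ)
    (φ : I → Fin a → ℂ) (ψ : I → Fin b → ℂ)
    (I₁ I₂ : Finset I) (hunion : I₁ ∪ I₂ = Finset.univ)
    (hφ : Submodule.span ℂ (φ '' ↑I₁) ≠ ⊤)
    (hψ : Submodule.span ℂ (ψ '' ↑I₂) ≠ ⊤) :
    ∃ (a' : Fin a → ℂ) (b' : Fin b → ℂ), a' ≠ 0 ∧ b' ≠ 0 ∧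
      ∀ i : I,
        (∑ x : Fin a, (starRingEnd ℂ) (a' x) * φ i x) *
          (∑ y : Fin b, (starRingEnd ℂ) (b' y) * ψ i y) = 0 := by
  obtain ⟨v, hv0, hv⟩ := exists_ne_zero_forall_dotProduct_eq_zero_of_span_ne_top hφ
  obtain ⟨w, hw0, hw⟩ := exists_ne_zero_forall_dotProduct_eq_zero_of_span_ne_top hψ
  -- conjugating the witnesses turns the Hermitian products into dot products
  refine ⟨star v, star w, star_ne_zero.mpr hv0, star_ne_zero.mpr hw0, fun i => ?_⟩
  simp only [Pi.star_apply, Complex.star_def, Complex.conj_conj, ← dotProduct.eq_1]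
  rcases Finset.mem_union.mp (hunion ▸ Finset.mem_univ i) with hi | hi
  · rw [hv _ ⟨i, hi, rfl⟩, zero_mul]
  · rw [hw _ ⟨i, hi, rfl⟩, mul_zero]

/-- Sufficiency half of the Bennett et al. criterion: if the index set is
partitioned into `I₁` and `I₂` whose local vectors fail to span `ℂ^a` resp.
`ℂ^b`, then there is a nonzero product vector `a' ⊗ b'` orthogonal to every
`φ_i ⊗ ψ_i`. -/
theorem extendible_of_partition {I : Type*} [Fintype I] [DecidableEq I] (a b : ℕ)
    (φ : I → Fin a → ℂ) (ψ : I → Fin b → ℂ)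
    (I₁ I₂ : Finset I) (hunion : I₁ ∪ I₂ = Finset.univ) (hdisj : I₁ ∩ I₂ = ∅)
    (hφ : Submodule.span ℂ (φ '' ↑I₁) ≠ ⊤)
    (hψ : Submodule.span ℂ (ψ '' ↑I₂) ≠ ⊤) :
    ∃ (a' : Fin a → ℂ) (b' : Fin b → ℂ), a' ≠ 0 ∧ b' ≠ 0 ∧
      ∀ i : I,
        (∑ x : Fin a, (starRingEnd ℂ) (a' x) * φ i x) *
          (∑ y : Fin b, (starRingEnd ℂ) (b' y) * ψ i y) = 0 :=
  extendible_of_partition_general a b φ ψ I₁ I₂ hunion hφ hψ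
end

section
/- (Bennett et al. criterion, bipartite form.) Let φ : Fin k → (Fin a → ℂ) and ψ : Fin k → (Fin b → ℂ) with k ≥ a + b − 1. Then the following are equivalent: (1) there exist nonzero vectors a' ∈ Fin a → ℂ and b' ∈ Fin b → ℂ with ⟨a', φ_i⟩ · ⟨b', ψ_i⟩ = 0 for all i (i.e., the set {φ_i ⊗ ψ_i} is extendible by a product vector); (2) there exists a partition of Fin k into disjoint sets I₁ and I₂ such that the span of {φ_i : i ∈ I₁} is a proper subspace of ℂ^a and the span of {ψ_i : i ∈ I₂} is a proper subspace of ℂ^b. -/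
/-!
A family fails to span `K^n` exactly when a nonzero linear functional vanishes on it, and every
functional is `star u ⬝ᵥ ·` for a unique `u`.
Given an orthogonal product vector `u ⊗ v`, the indices with `⟨u, φ i⟩ = 0` form `I₁`, and on
the complement the product vanishes only through `⟨v, ψ i⟩ = 0`. Conversely, vectors orthogonal
to the two non-spanning families assemble into an orthogonal product vector.
-/

open Finset Matrix Submodule

theorem span_ne_top_iff_exists_dotProduct_eq_zero {K ι : Type*} [Field K] [Fintype ι]
    [DecidableEq ι] {S : Set (ι → K)} :
    span K S ≠ ⊤ ↔ ∃ w ≠ 0, ∀ s ∈ S, w ⬝ᵥ s = 0 := by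
  constructor
  · intro h
    obtain ⟨f, hf, hle⟩ := exists_le_ker_of_lt_top _ h.lt_top
    refine ⟨(dotProductEquiv K ι).symm f, by simpa using hf, fun s hs => ?_⟩
    rw [← dotProductEquiv_apply_apply, LinearEquiv.apply_symm_apply]
    exact hle (subset_span hs)
  · rintro ⟨w, hw, hS⟩ htop
    exact hw <| (dotProductEquiv K ι).map_eq_zero_iff.mp <| LinearMap.ext_on htop (g := 0) hS

theorem span_ne_top_iff_exists_star_dotProduct_eq_zero {K ι : Type*} [Field K] [StarRing K]
    [Fintype ι] [DecidableEq ι] {S : Set (ι → K)} :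
    span K S ≠ ⊤ ↔ ∃ v ≠ 0, ∀ s ∈ S, star v ⬝ᵥ s = 0 := by
  rw [span_ne_top_iff_exists_dotProduct_eq_zero]
  exact ⟨fun ⟨w, hw, h⟩ => ⟨star w, star_ne_zero.2 hw, by simpa using h⟩,
    fun ⟨v, hv, h⟩ => ⟨star v, star_ne_zero.2 hv, h⟩⟩

theorem exists_orthogonal_product_iff_exists_partition {K ι m n : Type*} [Field K] [StarRing K]
    [Fintype ι] [DecidableEq ι] [Fintype m] [DecidableEq m] [Fintype n] [DecidableEq n]
    (φ : ι → m → K) (ψ : ι → n → K) :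
    (∃ (u : m → K) (v : n → K), u ≠ 0 ∧ v ≠ 0 ∧ ∀ i, (star u ⬝ᵥ φ i) * (star v ⬝ᵥ ψ i) = 0) ↔
      ∃ I₁ I₂ : Finset ι, I₁ ∪ I₂ = univ ∧ I₁ ∩ I₂ = ∅ ∧
        span K (φ '' ↑I₁) ≠ ⊤ ∧ span K (ψ '' ↑I₂) ≠ ⊤ := by
  classical
  simp only [span_ne_top_iff_exists_star_dotProduct_eq_zero, Set.forall_mem_image]
  constructor
  · rintro ⟨u, v, hu, hv, h⟩
    refine ⟨univ.filter (star u ⬝ᵥ φ · = 0), univ.filter (¬star u ⬝ᵥ φ · = 0),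
      filter_union_filter_not_eq _ _,
      disjoint_iff_inter_eq_empty.mp (disjoint_filter_filter_not _ _ _),
      ⟨u, hu, fun i hi => (mem_filter.mp hi).2⟩,
      ⟨v, hv, fun i hi => (mul_eq_zero.mp (h i)).resolve_left (mem_filter.mp hi).2⟩⟩
  · rintro ⟨I₁, I₂, hunion, -, ⟨u, hu, hI₁⟩, ⟨v, hv, hI₂⟩⟩
    refine ⟨u, v, hu, hv, fun i => ?_⟩
    rcases mem_union.mp (hunion ▸ mem_univ i) with hi | hi
    · rw [hI₁ hi, zero_mul]
    · rw [hI₂ hi, mul_zero]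

theorem bennett_criterion_general (a b k : ℕ)
    (φ : Fin k → Fin a → ℂ) (ψ : Fin k → Fin b → ℂ) :
    (∃ (a' : Fin a → ℂ) (b' : Fin b → ℂ), a' ≠ 0 ∧ b' ≠ 0 ∧
      ∀ i : Fin k,
        (∑ x : Fin a, (starRingEnd ℂ) (a' x) * φ i x) *
          (∑ y : Fin b, (starRingEnd ℂ) (b' y) * ψ i y) = 0) ↔
    (∃ I₁ I₂ : Finset (Fin k), I₁ ∪ I₂ = Finset.univ ∧ I₁ ∩ I₂ = ∅ ∧
      Submodule.span ℂ (φ '' ↑I₁) ≠ ⊤ ∧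
      Submodule.span ℂ (ψ '' ↑I₂) ≠ ⊤) :=
  -- `∑ x, conj (a' x) * φ i x` is `star a' ⬝ᵥ φ i` by unfolding.
  exists_orthogonal_product_iff_exists_partition φ ψ

/-- Bennett et al. criterion (bipartite form): for `k ≥ a + b - 1`, the set
`{φ_i ⊗ ψ_i}` is extendible by a nonzero product vector iff the index set can
be partitioned into `I₁`, `I₂` whose local vectors fail to span `ℂ^a` resp.
`ℂ^b`. -/
theorem bennett_criterion (a b k : ℕ) (ha : 1 ≤ a) (hb : 1 ≤ b)
    (hk : a + b - 1 ≤ k)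
    (φ : Fin k → Fin a → ℂ) (ψ : Fin k → Fin b → ℂ) :
    (∃ (a' : Fin a → ℂ) (b' : Fin b → ℂ), a' ≠ 0 ∧ b' ≠ 0 ∧
      ∀ i : Fin k,
        (∑ x : Fin a, (starRingEnd ℂ) (a' x) * φ i x) *
          (∑ y : Fin b, (starRingEnd ℂ) (b' y) * ψ i y) = 0) ↔
    (∃ I₁ I₂ : Finset (Fin k), I₁ ∪ I₂ = Finset.univ ∧ I₁ ∩ I₂ = ∅ ∧
      Submodule.span ℂ (φ '' ↑I₁) ≠ ⊤ ∧
      Submodule.span ℂ (ψ '' ↑I₂) ≠ ⊤) :=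
  bennett_criterion_general a b k φ ψ
end

section
/- Let u^{(1)}, …, u^{(k)} : Fin n → (Fin d → ℂ) be tuples of nonzero local vectors with induced fully product vectors v₁, …, v_k in (ℂ^d)^{⊗n}. Suppose there exist an index i, a site m, and a set T of indices with i ∉ T and |T| ≥ k − d^{n-1} + 1, such that ⟨u_m^{(i)}, u_m^{(j)}⟩ = 0 for every j ∈ T. Then there exists a nonzero biproduct vector split at site m (with site-m factor u_m^{(i)}) orthogonal to all of v₁, …, v_k. (This is the structural core of the main proof; pairwise orthogonality of the vᵢ is not needed, and if the orthogonality count |T| exceeds the pigeonhole value by μ, the admissible cardinality k increases by μ.) -/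
/-!
Splitting the sum over `x` into the value at site `m` and the restriction to the other sites,
the inner product of a product vector `v_l` with `x ↦ u_m^{(i)}(x m) · ξ(x|_{≠m})` factors as
`⟨u_m^{(l)}, u_m^{(i)}⟩ · ⟨w_l, ξ⟩`, where `w_l` is the product of the remaining local vectors.
The first factor vanishes for `l ∈ T`, so `ξ` only has to be orthogonal to the at most
`k - |T| < d^{n-1}` vectors `w_l` with `l ∉ T`, and such a nonzero `ξ` exists by counting dimensions.
-/

open Finset Matrix

theorem Matrix.exists_ne_zero_mulVec_eq_zero_of_card_lt {K ι Y : Type*} [Field K] [Fintype ι]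
    [Fintype Y] (A : Matrix ι Y K) (h : Fintype.card ι < Fintype.card Y) :
    ∃ ξ ≠ 0, A *ᵥ ξ = 0 := by
  have hker : LinearMap.ker A.mulVecLin ≠ ⊥ :=
    LinearMap.ker_ne_bot_of_finrank_lt (by simpa only [Module.finrank_fintype_fun_eq_card])
  obtain ⟨ξ, hξ, hξ0⟩ := (Submodule.ne_bot_iff _).mp hker
  exact ⟨ξ, hξ0, hξ⟩

theorem sum_prod_mul_biproduct {α β R : Type*} [Fintype α] [DecidableEq α] [Fintype β]
    [CommSemiring R] (p : α → β → R) (m : α) (a : β → R) (ξ : ({j // j ≠ m} → β) → R) :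
    ∑ x : α → β, (∏ j, p j (x j)) * (a (x m) * ξ (fun j => x j)) =
      (∑ b, p m b * a b) * ∑ y, (∏ j : {j // j ≠ m}, p j (y j)) * ξ y := by
  rw [← (Equiv.funSplitAt m β).symm.sum_comp, Fintype.sum_prod_type, Finset.sum_mul_sum]
  refine sum_congr rfl fun b _ => sum_congr rfl fun y _ => ?_
  have hm : (Equiv.funSplitAt m β).symm (b, y) m = b := dif_pos rfl
  have hne (j : {j // j ≠ m}) : (Equiv.funSplitAt m β).symm (b, y) j = y j := dif_neg j.2
  simp only [Fintype.prod_eq_mul_prod_subtype_ne _ m, hm, hne]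
  ring

theorem biproduct_extension_general (n d k : ℕ)
    (u : Fin k → Fin n → Fin d → ℂ)
    (v : Fin k → (Fin n → Fin d) → ℂ)
    (hv : ∀ i, v i = fun x => ∏ m, u i m (x m))
    (i : Fin k) (m : Fin n) (T : Finset (Fin k))
    (hT : k - d ^ (n - 1) + 1 ≤ T.card)
    (horth : ∀ j ∈ T,
      ∑ a : Fin d, (starRingEnd ℂ) (u i m a) * u j m a = 0) :
    ∃ ξ : ({j : Fin n // j ≠ m} → Fin d) → ℂ, ξ ≠ 0 ∧
      ∀ l : Fin k,
        ∑ x : Fin n → Fin d,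
          (starRingEnd ℂ) (v l x) * (u i m (x m) * ξ (fun j => x j.1)) = 0 := by
  let w : Matrix {l // l ∉ T} ({j : Fin n // j ≠ m} → Fin d) ℂ :=
    Matrix.of fun l y => ∏ j : {j : Fin n // j ≠ m}, (starRingEnd ℂ) (u l j (y j))
  have hcard : Fintype.card {l // l ∉ T} < Fintype.card ({j : Fin n // j ≠ m} → Fin d) := by
    have hTk : T.card ≤ k := by simpa using T.card_le_univ
    simp only [Fintype.card_subtype_compl, Fintype.card_coe, Fintype.card_fin, Fintype.card_pi,
      prod_const, card_univ, Fintype.card_unique]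
    omega
  obtain ⟨ξ, hξ0, hξ⟩ := w.exists_ne_zero_mulVec_eq_zero_of_card_lt hcard
  refine ⟨ξ, hξ0, fun l => ?_⟩
  simp only [hv, map_prod]
  rw [sum_prod_mul_biproduct (fun j a => starRingEnd ℂ (u l j a)) m (u i m) ξ]
  by_cases hl : l ∈ T
  · refine mul_eq_zero_of_left ?_ _
    simpa [mul_comm] using congrArg (starRingEnd ℂ) (horth l hl)
  · exact mul_eq_zero_of_right _ (congrFun hξ ⟨l, hl⟩ :)

/-- Structural core of the main proof: if some tuple `u^{(i)}` is orthogonal at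
site `m` to at least `k - d^{n-1} + 1` of the other tuples (indexed by `T`),
then the biproduct vector with site-`m` factor `u_m^{(i)}` and a suitable
nonzero `ξ` on the remaining sites is orthogonal to all induced product
vectors `v₁, …, v_k`. -/
theorem biproduct_extension (n d k : ℕ) (hn : 2 ≤ n) (hd : 1 ≤ d)
    (u : Fin k → Fin n → Fin d → ℂ) (hu : ∀ i m, u i m ≠ 0)
    (v : Fin k → (Fin n → Fin d) → ℂ)
    (hv : ∀ i, v i = fun x => ∏ m, u i m (x m))
    (i : Fin k) (m : Fin n) (T : Finset (Fin k))
    (hiT : i ∉ T) (hT : k - d ^ (n - 1) + 1 ≤ T.card)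
    (horth : ∀ j ∈ T,
      ∑ a : Fin d, (starRingEnd ℂ) (u i m a) * u j m a = 0) :
    ∃ ξ : ({j : Fin n // j ≠ m} → Fin d) → ℂ, ξ ≠ 0 ∧
      ∀ l : Fin k,
        ∑ x : Fin n → Fin d,
          (starRingEnd ℂ) (v l x) * (u i m (x m) * ξ (fun j => x j.1)) = 0 :=
  biproduct_extension_general n d k u v hv i m T hT horth
end
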